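/- arXiv:math/0607309 — 2 statements merged into one kernel-verified Lean document; each statement's English description precedes it below -/
import Mathlib

section
/- For every real w ≥ 3, one has ψ((w+1)/2) - ψ(w/2) < 1/(w-1), where ψ is the digamma function. -/
/-- The digamma function `ψ = (log ∘ Γ)'`. -/
noncomputable def digamma (t : ℝ) : ℝ := deriv (fun s => Real.log (Real.Gamma s)) t

open Real Set

private lemma lgamma_diff {x : ℝ} (hx : 0 < x) :
    DifferentiableAt ℝ (fun s => Real.log (Real.Gamma s)) x := by
  refine (Real.differentiableAt_Gamma ?_).log (Real.Gamma_ne_zero ?_) <;>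
    exact fun m => ((neg_nonpos.mpr (Nat.cast_nonneg m)).trans_lt hx).ne'

private lemma lgamma_rec {x : ℝ} (hx : 0 < x) :
    Real.log (Real.Gamma (x + 1)) = Real.log (Real.Gamma x) + Real.log x := by
  rw [Real.Gamma_add_one hx.ne', Real.log_mul hx.ne' (Real.Gamma_pos_of_pos hx).ne', add_comm]

private lemma digamma_rec {x : ℝ} (hx : 0 < x) : digamma (x + 1) = digamma x + 1 / x := by
  unfold digamma
  rw [← deriv_comp_add_const, one_div, ← Real.deriv_log,
    ← deriv_add (lgamma_diff hx) (Real.differentiableAt_log hx.ne')]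
  apply Filter.EventuallyEq.deriv_eq
  filter_upwards [eventually_gt_nhds hx] with y hy using lgamma_rec hy

private lemma digamma_upper {x : ℝ} (hx : 1 ≤ x) :
    digamma (x + 1 / 2) - digamma x ≤ 2 * Real.log x - 2 * Real.log (x - 1 / 2) := by
  have hx0 : (0:ℝ) < x := by linarith
  have hc : ConvexOn ℝ (Ioi 0) (fun s => Real.log (Real.Gamma s)) := by
    have := Real.convexOn_log_Gamma
    rwa [Function.comp_def] at this
  set f := fun s => Real.log (Real.Gamma s) with hf
  have h1 : digamma (x + 1 / 2) ≤ slope f (x + 1/2) (x + 1) := by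
    exact hc.deriv_le_slope (by simp; linarith) (by simp; linarith) (by linarith)
      (lgamma_diff (by linarith))
  have h2 : slope f (x - 1/2) x ≤ digamma x := by
    exact hc.slope_le_deriv (by simp; linarith) (by simp; linarith) (by linarith)
      (lgamma_diff hx0)
  have e1 : slope f (x + 1/2) (x + 1) = 2 * (f (x+1) - f (x + 1/2)) := by
    rw [slope_def_field]; field_simp; ring
  have e2 : slope f (x - 1/2) x = 2 * (f x - f (x - 1/2)) := by
    rw [slope_def_field]; field_simp; ring
  have r1 : f (x + 1) = f x + Real.log x := lgamma_rec hx0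
  have r2 : f (x + 1/2) = f (x - 1/2) + Real.log (x - 1/2) := by
    have : x + 1/2 = (x - 1/2) + 1 := by ring
    rw [this]; exact lgamma_rec (by linarith)
  rw [e1, r1, r2] at h1
  rw [e2] at h2
  linarith

/-- The difference `D w = ψ((w+1)/2) - ψ(w/2)` satisfies a recurrence. -/
private lemma D_rec {w : ℝ} (hw : 0 < w) :
    digamma ((w + 2 + 1) / 2) - digamma ((w + 2) / 2)
      = digamma ((w + 1) / 2) - digamma (w / 2) + 2 / (w + 1) - 2 / w := by
  have e1 : (w + 2 + 1) / 2 = (w + 1) / 2 + 1 := by ring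
  have e2 : (w + 2) / 2 = w / 2 + 1 := by ring
  rw [e1, e2, digamma_rec (by linarith : (0:ℝ) < (w+1)/2),
    digamma_rec (by linarith : (0:ℝ) < w/2)]
  have hw1 : (0:ℝ) < w + 1 := by linarith
  field_simp
  ring

private lemma D_telescope {w : ℝ} (hw : 3 ≤ w) (n : ℕ) :
    digamma ((w + 1) / 2) - digamma (w / 2)
      ≤ digamma ((w + 2 * n + 1) / 2) - digamma ((w + 2 * n) / 2)
        + (1 / (w - 1/2) - 1 / (w + 2 * n - 1/2)) := by
  induction n with
  | zero => push_cast; simp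
  | succ n ih =>
    set y := w + 2 * n with hy
    have hy3 : 3 ≤ y := by
      have h : (0:ℝ) ≤ (n:ℝ) := n.cast_nonneg
      rw [hy]; linarith
    have hrec := D_rec (w := y) (by linarith)
    have key : 2 / y - 2 / (y + 1) ≤ 1 / (y - 1/2) - 1 / (y + 3/2) := by
      have e1 : 2 / y - 2 / (y + 1) = 2 / (y * (y + 1)) := by
        field_simp; ring
      have e2 : 1 / (y - 1/2) - 1 / (y + 3/2) = 2 / ((y - 1/2) * (y + 3/2)) := by
        rw [div_sub_div _ _ (by nlinarith : (y:ℝ) - 1/2 ≠ 0) (by nlinarith : (y:ℝ) + 3/2 ≠ 0)]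
        ring_nf
      rw [e1, e2]
      apply div_le_div_of_nonneg_left (by norm_num) (by nlinarith) (by nlinarith)
    have step : digamma ((y + 1) / 2) - digamma (y / 2)
        ≤ digamma ((y + 2 + 1) / 2) - digamma ((y + 2) / 2)
          + (1 / (y - 1/2) - 1 / (y + 3/2)) := by
      rw [hrec]; linarith
    have e3 : y + 2 = w + 2 * (n + 1 : ℕ) := by push_cast [hy]; ring
    have e4 : y + 3/2 = w + 2 * (n + 1 : ℕ) - 1/2 := by push_cast [hy]; ring
    rw [e3, e4] at step
    calc digamma ((w + 1) / 2) - digamma (w / 2)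
        ≤ digamma ((y + 1) / 2) - digamma (y / 2) + (1 / (w - 1/2) - 1 / (y - 1/2)) := ih
      _ ≤ _ := by linarith

/-- For `w ≥ 3`, `ψ((w+1)/2) - ψ(w/2) < 1/(w-1)`. -/
theorem digamma_half_diff_upper_of_three_le (w : ℝ) (hw : 3 ≤ w) :
    digamma ((w + 1) / 2) - digamma (w / 2) < 1 / (w - 1) := by
  have hgap : 0 < 1 / (w - 1) - 1 / (w - 1/2) := by
    rw [sub_pos]
    apply div_lt_div_of_pos_left one_pos (by linarith) (by linarith)
  set g := 1 / (w - 1) - 1 / (w - 1/2) with hg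
  obtain ⟨n, hn⟩ := exists_nat_gt (1 / g)
  have hn1 : 1 / g < (n:ℝ) + 1 := by linarith [hn]
  have hng : 1 / ((n:ℝ) + 1) < g := by
    rw [div_lt_iff₀ (by positivity)] at hn1 ⊢
    · nlinarith
  have htel := D_telescope hw n
  -- bound the tail term using convexity
  have hx : (1:ℝ) ≤ (w + 2 * n) / 2 := by
    have : (0:ℝ) ≤ (n:ℝ) := n.cast_nonneg
    linarith
  have hup := digamma_upper hx
  have e1 : (w + 2 * n) / 2 + 1 / 2 = (w + 2 * n + 1) / 2 := by ring
  rw [e1] at hup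
  -- log x - log (x - 1/2) ≤ (1/2)/(x - 1/2)
  set x := (w + 2 * n) / 2 with hxdef
  have hx2 : (0:ℝ) < x - 1/2 := by linarith
  have hlog : Real.log x - Real.log (x - 1/2) ≤ (1/2) / (x - 1/2) := by
    rw [← Real.log_div (by linarith) (by linarith)]
    have := Real.log_le_sub_one_of_pos (show (0:ℝ) < x / (x - 1/2) by positivity)
    have e : x / (x - 1/2) - 1 = (1/2) / (x - 1/2) := by
      rw [div_sub_one hx2.ne']; congr 1; ring
    linarith [e ▸ this]
  have htail : digamma ((w + 2 * n + 1) / 2) - digamma ((w + 2 * n) / 2)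
      ≤ 1 / (x - 1/2) := by
    have : (1:ℝ) / (x - 1/2) = 2 * ((1/2) / (x - 1/2)) := by ring
    rw [this]
    linarith
  -- 1 / (x - 1/2) = 2 / (w + 2n - 1) ≤ 1/(n+1) < g
  have hxe : x - 1/2 = (w + 2 * n - 1) / 2 := by rw [hxdef]; ring
  have htail2 : 1 / (x - 1/2) ≤ 1 / ((n:ℝ) + 1) := by
    rw [hxe]
    apply div_le_div_of_nonneg_left one_pos.le (by positivity)
    linarith
  have hpos : 0 < 1 / (w + 2 * (n:ℝ) - 1/2) := by
    have h : (0:ℝ) ≤ (n:ℝ) := n.cast_nonneg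
    apply one_div_pos.mpr; linarith
  calc digamma ((w + 1) / 2) - digamma (w / 2)
      ≤ digamma ((w + 2 * n + 1) / 2) - digamma ((w + 2 * n) / 2)
        + (1 / (w - 1/2) - 1 / (w + 2 * n - 1/2)) := htel
    _ < 1 / ((n:ℝ) + 1) + 1 / (w - 1/2) := by
        have := htail.trans htail2
        linarith
    _ < g + 1 / (w - 1/2) := by linarith
    _ = 1 / (w - 1) := by rw [hg]; ring
end

section
/- For reals δ ≥ 3/2 and α > 0, one has ψ((α+δ+1)/2) - ψ((α+δ)/2 + 1) + 1/(α+δ²) < 0, where ψ is the digamma function. -/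
/-!
Put `x = (α + δ + 1) / 2`; the claim becomes `1 / (α + δ²) < ψ(x + 1/2) - ψ(x)`.
The function `f x = ψ(x + 1/2) - ψ(x)` is nonnegative (convexity of `log Γ`) and, by
`ψ(x + 1) = ψ(x) + 1/x`, satisfies `f x - f (x + 1) = 1/x - 1/(x + 1/2)`. The function
`g x = 1 / (2x - 1/3)` tends to `0` and has smaller decrements for `x ≥ 5/6`, so telescoping
gives `g ≤ f`. Finally `2x - 1/3 = α + δ + 2/3 < α + δ²` for `δ ≥ 3/2`.
-/

open Real Set Filter Topology

lemma differentiableAt_log_Gamma {x : ℝ} (hx : 0 < x) :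
    DifferentiableAt ℝ (fun s => log (Gamma s)) x :=
  (differentiableAt_Gamma fun m => by linarith [(m.cast_nonneg : (0 : ℝ) ≤ m)]).log
    (Gamma_pos_of_pos hx).ne'

lemma digamma_add_one {x : ℝ} (hx : 0 < x) : digamma (x + 1) = digamma x + x⁻¹ := by
  unfold digamma
  rw [← deriv_comp_add_const, ← Real.deriv_log,
    ← deriv_fun_add (differentiableAt_log_Gamma hx) (differentiableAt_log hx.ne')]
  refine EventuallyEq.deriv_eq ?_
  filter_upwards [eventually_gt_nhds hx] with y hy
  rw [Gamma_add_one hy.ne', log_mul hy.ne' (Gamma_pos_of_pos hy).ne', add_comm]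

lemma monotoneOn_digamma : MonotoneOn digamma (Ioi 0) :=
  convexOn_log_Gamma.monotoneOn_deriv fun _ hx => differentiableAt_log_Gamma hx

lemma le_of_forall_sub_add_one_le {f g : ℝ → ℝ} {a x : ℝ}
    (hstep : ∀ y, a ≤ y → g y - g (y + 1) ≤ f y - f (y + 1)) (hf : ∀ y, a ≤ y → 0 ≤ f y)
    (hg : Tendsto g atTop (𝓝 0)) (hx : a ≤ x) : g x ≤ f x := by
  have hxn (n : ℕ) : a ≤ x + n := le_add_of_le_of_nonneg hx n.cast_nonneg
  have htelescope (n : ℕ) : g x - g (x + n) ≤ f x - f (x + n) := by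
    induction n with
    | zero => simp
    | succ n ih =>
      rw [Nat.cast_succ, ← add_assoc]
      linarith [hstep _ (hxn n)]
  have hlim : Tendsto (fun n : ℕ => g x - g (x + n)) atTop (𝓝 (g x)) := by
    simpa using tendsto_const_nhds.sub (hg.comp (tendsto_atTop_add_const_left _ x tendsto_natCast_atTop_atTop))
  exact le_of_tendsto' hlim fun n => by linarith [htelescope n, hf _ (hxn n)]

lemma inv_le_digamma_add_half_sub_digamma {x : ℝ} (hx : 5 / 6 ≤ x) :
    (2 * x - 1 / 3)⁻¹ ≤ digamma (x + 1 / 2) - digamma x := by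
  refine le_of_forall_sub_add_one_le (f := fun y => digamma (y + 1 / 2) - digamma y)
    (g := fun y => (2 * y - 1 / 3)⁻¹) (a := 5 / 6) (fun y hy => ?_) (fun y hy => ?_) ?_ hx
  · have hy0 : 0 < y := by linarith
    have hshift : digamma (y + 1 + 1 / 2) = digamma (y + 1 / 2) + (y + 1 / 2)⁻¹ := by
      rw [add_right_comm, digamma_add_one (by linarith)]
    have hdecrement : (2 * y - 1 / 3)⁻¹ - (2 * (y + 1) - 1 / 3)⁻¹ ≤ y⁻¹ - (y + 1 / 2)⁻¹ := by
      rw [inv_sub_inv (by linarith) (by linarith), inv_sub_inv hy0.ne' (by linarith),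
        div_le_div_iff₀ (by nlinarith) (by nlinarith)]
      nlinarith
    rw [hshift, digamma_add_one hy0]
    linarith
  · exact sub_nonneg.2 <| monotoneOn_digamma (mem_Ioi.2 (by linarith)) (mem_Ioi.2 (by linarith))
      (by linarith)
  · exact tendsto_inv_atTop_zero.comp <|
      tendsto_atTop_add_const_right _ _ (tendsto_id.const_mul_atTop two_pos)

/-- For `δ ≥ 3/2` and `α > 0`,
`ψ((α+δ+1)/2) - ψ((α+δ)/2 + 1) + 1/(α+δ²) < 0`. -/
theorem digamma_combination_neg (δ α : ℝ) (hδ : 3 / 2 ≤ δ) (hα : 0 < α) :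
    digamma ((α + δ + 1) / 2) - digamma ((α + δ) / 2 + 1) + 1 / (α + δ ^ 2) < 0 := by
  set x := (α + δ + 1) / 2 with hx
  have hshift : (α + δ) / 2 + 1 = x + 1 / 2 := by ring
  have hbound := inv_le_digamma_add_half_sub_digamma (x := x) (by linarith)
  have hlt : 2 * x - 1 / 3 < α + δ ^ 2 := by nlinarith
  have hinv : 1 / (α + δ ^ 2) < (2 * x - 1 / 3)⁻¹ := by
    rw [one_div]
    exact inv_strictAnti₀ (by linarith) hlt
  rw [hshift]
  linarith
end
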